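/- No shortest (s,t)-path in G_φ contains two gadget vertices v(i,vs,cs,j) and v(i,vs',cs',j') with the same level i but different v-states vs ≠ vs'. -/
import Mathlib


/-- Vertices of the graph `G_φ` (for a CNF formula with `n` variables and `m` clauses):
`s`, `t`, the vertices `beg_{j+1}` and `end_{j+1}` (for `j : Fin (2m)`), and the gadget
vertices `v(i+1, vs, cs, j+1)` (for `i : Fin n`, `vs cs : Bool`, `j : Fin (2m)`).
An index `i : Fin n` encodes level `i+1`, and `j : Fin (2m)` encodes depth `j+1`. -/
inductive PVert (n m : ℕ) : Type where
  | s : PVert n m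
  | t : PVert n m
  | beg (j : Fin (2 * m)) : PVert n m
  | en (j : Fin (2 * m)) : PVert n m
  | v (i : Fin n) (vs : Bool) (cs : Bool) (j : Fin (2 * m)) : PVert n m
deriving DecidableEq

/-- The depth of a vertex of `G_φ`. -/
def PVert.depth {n m : ℕ} : PVert n m → ℕ
  | PVert.s => 0
  | PVert.t => 2 * m + 1
  | PVert.beg j => (j : ℕ) + 1
  | PVert.en j => (j : ℕ) + 1
  | PVert.v _ _ _ j => (j : ℕ) + 1

/-- The level of a vertex of `G_φ` (`beg`-vertices have level `0`, `end`-vertices have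
level `n+1`, the gadget vertex `v(i,vs,cs,j)` has level `i`; junk value `0` for `s`,`t`). -/
def PVert.level {n m : ℕ} : PVert n m → ℕ
  | PVert.beg _ => 0
  | PVert.en _ => n + 1
  | PVert.v i _ _ _ => (i : ℕ) + 1
  | _ => 0

/-- The c-state of a vertex of `G_φ` (`beg`-vertices have c-state `0`, `end`-vertices have
c-state `1`, the gadget vertex `v(i,vs,cs,j)` has c-state `cs`; junk value `0` for `s`,`t`). -/
def PVert.cstate {n m : ℕ} : PVert n m → ℕ
  | PVert.beg _ => 0
  | PVert.en _ => 1
  | PVert.v _ _ cs _ => cond cs 1 0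
  | _ => 0

/-- The (directed) edges of `G_φ`.  The CNF formula `φ` is recorded by its clauses:
`(i, vs) ∈ φ jc` means that clause `C_{jc+1}` contains the literal asserting `x_{i+1} = vs`,
i.e. that setting `x_{i+1} = vs` satisfies clause `C_{jc+1}`. -/
def PEdge (n m : ℕ) (φ : Fin m → Finset (Fin n × Bool)) (a b : PVert n m) : Prop :=
  -- (a) gadget edges, same c-state: from depth j to depth j+1 inside a gadget
  (∃ (i : Fin n) (vs cs : Bool) (j j' : Fin (2 * m)), (j' : ℕ) = (j : ℕ) + 1 ∧
      a = PVert.v i vs cs j ∧ b = PVert.v i vs cs j') ∨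
  -- (a) gadget edges, crossing: from even depth 2j to odd depth 2j+1, flipping the c-state
  (∃ (i : Fin n) (vs cs : Bool) (j j' : Fin (2 * m)), (j' : ℕ) = (j : ℕ) + 1 ∧
      (j : ℕ) % 2 = 1 ∧ a = PVert.v i vs cs j ∧ b = PVert.v i vs (!cs) j') ∨
  -- (b) formula edges: from v(i,vs,1,2jc-1) to v(i,vs,0,2jc) when x_i = vs satisfies C_jc
  (∃ (i : Fin n) (vs : Bool) (j j' : Fin (2 * m)) (jc : Fin m), (j' : ℕ) = (j : ℕ) + 1 ∧
      (j : ℕ) = 2 * (jc : ℕ) ∧ (i, vs) ∈ φ jc ∧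
      a = PVert.v i vs true j ∧ b = PVert.v i vs false j') ∨
  -- (c) inter-level edges, same c-state: from level i+1, depth j-1 to level i, depth j
  (∃ (ihi ilo : Fin n) (vs' vs cs : Bool) (j j' : Fin (2 * m)), (ihi : ℕ) = (ilo : ℕ) + 1 ∧
      (j' : ℕ) = (j : ℕ) + 1 ∧ a = PVert.v ihi vs' cs j ∧ b = PVert.v ilo vs cs j') ∨
  -- (c) inter-level edges, crossing: from level i+1, even depth 2j to level i, depth 2j+1
  (∃ (ihi ilo : Fin n) (vs' vs cs : Bool) (j j' : Fin (2 * m)), (ihi : ℕ) = (ilo : ℕ) + 1 ∧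
      (j' : ℕ) = (j : ℕ) + 1 ∧ (j : ℕ) % 2 = 1 ∧
      a = PVert.v ihi vs' cs j ∧ b = PVert.v ilo vs (!cs) j') ∨
  -- (d) the begin path
  (∃ (j j' : Fin (2 * m)), (j' : ℕ) = (j : ℕ) + 1 ∧ a = PVert.beg j ∧ b = PVert.beg j') ∨
  -- (d) the end path
  (∃ (j j' : Fin (2 * m)), (j' : ℕ) = (j : ℕ) + 1 ∧ a = PVert.en j ∧ b = PVert.en j') ∨
  -- (d) from v(1,vs,0,j) to beg_{j+1}
  (∃ (i : Fin n) (vs : Bool) (j j' : Fin (2 * m)), (i : ℕ) = 0 ∧ (j' : ℕ) = (j : ℕ) + 1 ∧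
      a = PVert.v i vs false j ∧ b = PVert.beg j') ∨
  -- (d) from end_j to v(n,vs,1,j+1)
  (∃ (i : Fin n) (vs : Bool) (j j' : Fin (2 * m)), (i : ℕ) + 1 = n ∧ (j' : ℕ) = (j : ℕ) + 1 ∧
      a = PVert.en j ∧ b = PVert.v i vs true j') ∨
  -- edges from s to every vertex of depth 1
  (a = PVert.s ∧ b.depth = 1) ∨
  -- edges from every vertex of depth 2m to t
  (a.depth = 2 * m ∧ b = PVert.t)

/-- A shortest `(s,t)`-path in `G_φ`: a directed path from `s` to `t` with `2m+2` vertices,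
one vertex of each depth `0, 1, …, 2m+1`. -/
def IsStPath (n m : ℕ) (φ : Fin m → Finset (Fin n × Bool))
    (p : Fin (2 * m + 1 + 1) → PVert n m) : Prop :=
  p 0 = PVert.s ∧ p (Fin.last (2 * m + 1)) = PVert.t ∧
    (∀ i : Fin (2 * m + 1), PEdge n m φ (p i.castSucc) (p i.succ)) ∧
    (∀ d : Fin (2 * m + 1 + 1), (p d).depth = (d : ℕ))

/-- Two vertex sequences differ in exactly one position. -/
def DiffOne {N : ℕ} {α : Type*} (p q : Fin N → α) : Prop :=
  ∃ i, p i ≠ q i ∧ ∀ j, j ≠ i → p j = q j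

/-- `ρ 0, ρ 1, …, ρ ℓ` is a reconfiguration sequence of length `ℓ` from the shortest
`(s,t)`-path `p` to the shortest `(s,t)`-path `q` in `G_φ`. -/
def PReconfSeq (n m : ℕ) (φ : Fin m → Finset (Fin n × Bool))
    (ρ : ℕ → (Fin (2 * m + 1 + 1) → PVert n m)) (ℓ : ℕ)
    (p q : Fin (2 * m + 1 + 1) → PVert n m) : Prop :=
  ρ 0 = p ∧ ρ ℓ = q ∧ (∀ i ≤ ℓ, IsStPath n m φ (ρ i)) ∧
    ∀ i < ℓ, DiffOne (ρ i) (ρ (i + 1))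

/-- The path `p_b = (s, beg_1, …, beg_{2m}, t)`. -/
def pbP (n m : ℕ) : Fin (2 * m + 1 + 1) → PVert n m := fun d =>
  if h0 : (d : ℕ) = 0 then PVert.s
  else if h1 : (d : ℕ) ≤ 2 * m then PVert.beg ⟨(d : ℕ) - 1, by omega⟩
  else PVert.t

/-- The path `p_e = (s, end_1, …, end_{2m}, t)`. -/
def peP (n m : ℕ) : Fin (2 * m + 1 + 1) → PVert n m := fun d =>
  if h0 : (d : ℕ) = 0 then PVert.s
  else if h1 : (d : ℕ) ≤ 2 * m then PVert.en ⟨(d : ℕ) - 1, by omega⟩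
  else PVert.t

lemma edge_props {n m : ℕ} {φ : Fin m → Finset (Fin n × Bool)} {a b : PVert n m}
    (h : PEdge n m φ a b) (ha : a ≠ PVert.s) (hb : b ≠ PVert.t) :
    b.level ≤ a.level ∧
    (∀ (i i' : Fin n) (vs cs vs' cs' : Bool) (j j' : Fin (2 * m)),
      a = PVert.v i vs cs j → b = PVert.v i' vs' cs' j' → a.level = b.level → vs' = vs) := by
  rcases h with ⟨i,vs,cs,j,j',hj,rfl,rfl⟩ | ⟨i,vs,cs,j,j',hj,hm2,rfl,rfl⟩ |
    ⟨i,vs,j,j',jc,hj,hjc,hmem,rfl,rfl⟩ | ⟨ihi,ilo,vsa,vsb,cs,j,j',hi,hj,rfl,rfl⟩ |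
    ⟨ihi,ilo,vsa,vsb,cs,j,j',hi,hj,hm2,rfl,rfl⟩ | ⟨j,j',hj,rfl,rfl⟩ | ⟨j,j',hj,rfl,rfl⟩ |
    ⟨i,vs,j,j',hi,hj,rfl,rfl⟩ | ⟨i,vs,j,j',hi,hj,rfl,rfl⟩ | ⟨rfl,hd⟩ | ⟨hd,rfl⟩
  all_goals first
    | exact absurd rfl ha
    | exact absurd rfl hb
    | (refine ⟨by simp only [PVert.level]; omega, ?_⟩
       intro i1 i1' vs1 cs1 vs1' cs1' j1 j1' hA hB hL
       simp_all [PVert.level]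
       try omega)


theorem stmt4_aux (n m : ℕ) (hn : 1 ≤ n) (hm : 1 ≤ m) (φ : Fin m → Finset (Fin n × Bool))
    (p : Fin (2 * m + 1 + 1) → PVert n m) (hp : IsStPath n m φ p)
    (pos pos' : Fin (2 * m + 1 + 1)) (i : Fin n) (vs cs vs' cs' : Bool)
    (j j' : Fin (2 * m))
    (h1 : p pos = PVert.v i vs cs j) (h2 : p pos' = PVert.v i vs' cs' j')
    (hle : (pos : ℕ) ≤ (pos' : ℕ)) :
    vs = vs' := by
  obtain ⟨hps, hpt, hedge, hdep⟩ := hp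
  have hposd : (j : ℕ) + 1 = (pos : ℕ) := by
    have := hdep pos; rw [h1] at this; simpa [PVert.depth] using this
  have hposd' : (j' : ℕ) + 1 = (pos' : ℕ) := by
    have := hdep pos'; rw [h2] at this; simpa [PVert.depth] using this
  have hjlt : (j : ℕ) < 2 * m := j.isLt
  have hjlt' : (j' : ℕ) < 2 * m := j'.isLt
  have ne_s : ∀ (k : Fin (2 * m + 1 + 1)), 1 ≤ (k : ℕ) → p k ≠ PVert.s := by
    intro k hk hsk
    have := hdep k; rw [hsk] at this; simp only [PVert.depth] at this; omega
  have ne_t : ∀ (k : Fin (2 * m + 1 + 1)), (k : ℕ) ≤ 2 * m → p k ≠ PVert.t := by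
    intro k hk htk
    have := hdep k; rw [htk] at this; simp only [PVert.depth] at this; omega
  have estep : ∀ (k : ℕ) (hA : k < 2 * m + 1 + 1) (hB : k + 1 < 2 * m + 1 + 1),
      1 ≤ k → k + 1 ≤ 2 * m →
      (p ⟨k + 1, hB⟩).level ≤ (p ⟨k, hA⟩).level ∧
      (∀ (i i' : Fin n) (vs cs vs' cs' : Bool) (j j' : Fin (2 * m)),
        p ⟨k, hA⟩ = PVert.v i vs cs j → p ⟨k + 1, hB⟩ = PVert.v i' vs' cs' j' →
        (p ⟨k, hA⟩).level = (p ⟨k + 1, hB⟩).level → vs' = vs) := by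
    intro k hA hB hk1 hk2
    have e := hedge ⟨k, by omega⟩
    exact edge_props e (ne_s ⟨k, hA⟩ hk1) (ne_t ⟨k + 1, hB⟩ hk2)
  have mono : ∀ (k1 : ℕ) (hA : k1 < 2 * m + 1 + 1), 1 ≤ k1 →
      ∀ (k2 : ℕ), k1 ≤ k2 → ∀ (hB : k2 < 2 * m + 1 + 1), k2 ≤ 2 * m →
      (p ⟨k2, hB⟩).level ≤ (p ⟨k1, hA⟩).level := by
    intro k1 hA hk1 k2 hk12
    induction k2, hk12 using Nat.le_induction with
    | base => intro hB _; exact le_of_eq rfl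
    | succ k2 hk12 ih =>
      intro hB hk2
      exact le_trans ((estep k2 (by omega) hB (by omega) hk2).1)
        (ih (by omega) (by omega))
  have hlev : ∀ (k : ℕ) (hA : k < 2 * m + 1 + 1), (pos : ℕ) ≤ k → k ≤ (pos' : ℕ) →
      (p ⟨k, hA⟩).level = (i : ℕ) + 1 := by
    intro k hA hk1 hk2
    have a1 := mono (pos : ℕ) (by omega) (by omega) k hk1 hA (by omega)
    have a2 := mono k hA (by omega) (pos' : ℕ) hk2 (by omega) (by omega)
    rw [Fin.eta, h1] at a1
    rw [Fin.eta, h2] at a2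
    simp only [PVert.level] at a1 a2
    exact le_antisymm a1 a2
  have hform : ∀ (k : ℕ) (hA : k < 2 * m + 1 + 1), (pos : ℕ) ≤ k → k ≤ (pos' : ℕ) →
      ∃ vsk csk jk, p ⟨k, hA⟩ = PVert.v i vsk csk jk := by
    intro k hA hk1 hk2
    have hl := hlev k hA hk1 hk2
    have hd := hdep ⟨k, hA⟩
    rcases hq : p ⟨k, hA⟩ with _ | _ | jb | je | ⟨i2, vs2, cs2, j2⟩
    · rw [hq] at hd; simp only [PVert.depth] at hd; omega
    · rw [hq] at hd; simp only [PVert.depth] at hd; omega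
    · rw [hq] at hl; simp only [PVert.level] at hl; omega
    · rw [hq] at hl; simp only [PVert.level] at hl
      have : (i : ℕ) < n := i.isLt
      omega
    · rw [hq] at hl; simp only [PVert.level] at hl
      have : i2 = i := Fin.ext (by omega)
      exact ⟨vs2, cs2, j2, by rw [this]⟩
  have main : ∀ (d : ℕ) (hd : (pos : ℕ) + d ≤ (pos' : ℕ)),
      ∃ csk jk, p ⟨(pos : ℕ) + d, by omega⟩ = PVert.v i vs csk jk := by
    intro d
    induction d with
    | zero =>
      intro _
      refine ⟨cs, j, ?_⟩
      have he : (⟨(pos : ℕ) + 0, by omega⟩ : Fin (2 * m + 1 + 1)) = pos := by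
        ext; simp
      rw [he, h1]
    | succ d ih =>
      intro hd
      obtain ⟨csk, jk, hk⟩ := ih (by omega)
      obtain ⟨vsk', csk', jk', hk'⟩ :=
        hform ((pos : ℕ) + d + 1) (by omega) (by omega) (by omega)
      have hlA := hlev ((pos : ℕ) + d) (by omega) (by omega) (by omega)
      have hlB := hlev ((pos : ℕ) + d + 1) (by omega) (by omega) (by omega)
      have est := (estep ((pos : ℕ) + d) (by omega) (by omega) (by omega) (by omega)).2
      have hv := est i i vs csk vsk' csk' jk jk' hk hk' (by rw [hlA, hlB])
      rw [hv] at hk'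
      exact ⟨csk', jk', hk'⟩
  obtain ⟨csk, jk, hk⟩ := main ((pos' : ℕ) - (pos : ℕ)) (by omega)
  have he : (⟨(pos : ℕ) + ((pos' : ℕ) - (pos : ℕ)), by omega⟩ : Fin (2 * m + 1 + 1)) = pos' := by
    ext; simp; omega
  rw [he, h2] at hk
  simp only [PVert.v.injEq] at hk
  exact hk.2.1.symm

/-- no shortest `(s,t)`-path in `G_φ` contains two gadget vertices with the
same level but different v-states. -/
theorem stmt4 (n m : ℕ) (hn : 1 ≤ n) (hm : 1 ≤ m) (φ : Fin m → Finset (Fin n × Bool))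
    (p : Fin (2 * m + 1 + 1) → PVert n m) (hp : IsStPath n m φ p)
    (pos pos' : Fin (2 * m + 1 + 1)) (i : Fin n) (vs cs vs' cs' : Bool)
    (j j' : Fin (2 * m))
    (h1 : p pos = PVert.v i vs cs j) (h2 : p pos' = PVert.v i vs' cs' j') :
    vs = vs' := by
  rcases le_total (pos : ℕ) (pos' : ℕ) with h | h
  · exact stmt4_aux n m hn hm φ p hp pos pos' i vs cs vs' cs' j j' h1 h2 h
  · exact (stmt4_aux n m hn hm φ p hp pos' pos i vs' cs' vs cs j' j h2 h1 h).symm
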